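/- arXiv:1408.2235 — 6 statements merged into one kernel-verified Lean document; each statement's English description precedes it below -/
import Mathlib

section
/- Let R be a commutative profinite integral domain (a compact Hausdorff totally disconnected topological commutative ring with no zero divisors), G a finite group, and N a normal subgroup of G. Let U be a topological R[G]-module which, as a topological R[N]-module, is topologically isomorphic to a direct product ∏_{i∈I} R[N] of copies of R[N] with the product topology. Then the map φ: U → U defined by φ(u) = ∑_{n∈N} n·u is a continuous R[G]-module homomorphism whose image is exactly the fixed-point submodule U^N and whose kernel is exactly I_N·U, where I_N is the augmentation ideal of R[N]. Consequently, φ induces an isomorphism of topological R[G]-modules U_N = U/I_N U ≅ U^N. -/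
/-- The product topology on the group algebra `R[G]` of a finite group,
via `R[G] ≅ R^G`. -/
noncomputable instance monoidAlgebraTopology (R G : Type*) [Semiring R] [TopologicalSpace R] :
    TopologicalSpace (MonoidAlgebra R G) :=
  TopologicalSpace.induced (fun f g => f.coeff g) inferInstance

section defs

variable (R : Type*) [CommRing R] {G : Type*} [Group G] (N : Subgroup G)
  (U : Type*) [AddCommGroup U] [Module R U] [DistribMulAction G U] [SMulCommClass G R U]

/-- The submodule `U^N` of `N`-fixed points. -/
def fixedSubmodule : Submodule R U where
  carrier := {u | ∀ n : N, (n : G) • u = u}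
  add_mem' := by
    intro a b ha hb n
    rw [smul_add, ha n, hb n]
  zero_mem' := fun n => smul_zero _
  smul_mem' := by
    intro r u hu n
    rw [smul_comm, hu n]

/-- The submodule `I_N·U`, where `I_N` is the augmentation ideal of `R[N]`:
it is spanned by the elements `n•u - u` with `n ∈ N`, `u ∈ U`. -/
def augSubmodule : Submodule R U :=
  Submodule.span R {x | ∃ (n : N) (u : U), x = (n : G) • u - u}

end defs

section aux

variable {R : Type*} [CommRing R] [TopologicalSpace R]
variable {Nt : Type*} [Group Nt] [Fintype Nt]

open MonoidAlgebra

lemma aux_eval_cont (x : Nt) : Continuous (fun f : MonoidAlgebra R Nt => f.coeff x) :=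
  (continuous_apply x).comp continuous_induced_dom

lemma aux_single_cont (x : Nt) :
    Continuous (fun r : R => (MonoidAlgebra.single x r : MonoidAlgebra R Nt)) := by
  refine (continuous_induced_rng (f := fun (f : MonoidAlgebra R Nt) g => f.coeff g)).mpr ?_
  apply continuous_pi
  intro y
  simp only [Function.comp]
  classical
  simp only [MonoidAlgebra.coeff_single, Finsupp.single_apply]
  by_cases h : x = y <;> simp [h] <;> first | exact continuous_id | exact continuous_const

lemma aux_sigma_mul (f : MonoidAlgebra R Nt) (x : Nt) :
    ((∑ n : Nt, single n (1:R)) * f).coeff x = ∑ m : Nt, f.coeff m := by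
  rw [Finset.sum_mul, MonoidAlgebra.coeff_sum, Finset.sum_apply']
  simp only [MonoidAlgebra.coeff_single_mul_apply, one_mul]
  exact Fintype.sum_equiv ((Equiv.inv Nt).trans (Equiv.mulRight x)) _ _ (fun n => rfl)

lemma aux_repr (f : MonoidAlgebra R Nt) : (∑ n : Nt, single n (f.coeff n)) = f := by
  classical
  ext x
  rw [MonoidAlgebra.coeff_sum, Finset.sum_apply']
  simp [MonoidAlgebra.coeff_single, Finsupp.single_apply, Finset.sum_ite_eq']

end aux

/-- if `U` is a topological `R[G]`-module that is free as a topological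
`R[N]`-module (`R` a commutative profinite integral domain, `N ⊴ G`, `G` finite), then
`φ(u) = ∑_{n∈N} n·u` is a continuous `R[G]`-homomorphism with image `U^N` and kernel
`I_N·U`, inducing a topological `R[G]`-module isomorphism `U/I_N U ≅ U^N`. -/
theorem stmt_5 (R : Type*) [CommRing R] [IsDomain R] [TopologicalSpace R]
    [IsTopologicalRing R] [CompactSpace R] [T2Space R] [TotallyDisconnectedSpace R]
    (G : Type*) [Group G] [Finite G] (N : Subgroup G) [N.Normal] [Fintype N]
    (U : Type*) [AddCommGroup U] [Module R U] [TopologicalSpace U]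
    [IsTopologicalAddGroup U] [ContinuousSMul R U]
    [DistribMulAction G U] [SMulCommClass G R U]
    (hact : ∀ g : G, Continuous fun u : U => g • u)
    (hfree : ∃ (I : Type) (e : U ≃ₗ[R] (I → MonoidAlgebra R N)),
      Continuous e ∧ Continuous e.symm ∧
      ∀ (n : N) (u : U), e ((n : G) • u) = fun i => MonoidAlgebra.single n 1 * e u i) :
    Continuous (fun u : U => ∑ n : N, (n : G) • u) ∧
    (∀ (r : R) (u : U), (∑ n : N, (n : G) • (r • u)) = r • ∑ n : N, (n : G) • u) ∧
    (∀ (g : G) (u : U), (∑ n : N, (n : G) • (g • u)) = g • ∑ n : N, (n : G) • u) ∧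
    Set.range (fun u : U => ∑ n : N, (n : G) • u) = (fixedSubmodule R N U : Set U) ∧
    {u : U | (∑ n : N, (n : G) • u) = 0} = (augSubmodule R N U : Set U) ∧
    ∃ e : (U ⧸ augSubmodule R N U) ≃ₗ[R] fixedSubmodule R N U,
      Continuous e ∧ Continuous e.symm ∧
      (∀ u : U, (e (Submodule.Quotient.mk u) : U) = ∑ n : N, (n : G) • u) ∧
      ∀ (g : G) (u : U),
        (e (Submodule.Quotient.mk (g • u)) : U) = g • (e (Submodule.Quotient.mk u) : U) := by
  classical
  obtain ⟨I, e, hec, hesc, heq⟩ := hfree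
  set σ : MonoidAlgebra R N := ∑ n : N, MonoidAlgebra.single n 1 with hσ
  -- the map φ as a plain function
  set φf : U → U := fun u => ∑ n : N, (n : G) • u with hφf
  -- continuity
  have hcont : Continuous φf := continuous_finset_sum _ fun n _ => hact (n : G)
  -- R-linearity in smul
  have hsmul : ∀ (r : R) (u : U), φf (r • u) = r • φf u := by
    intro r u
    simp only [hφf]
    rw [Finset.smul_sum]
    exact Finset.sum_congr rfl fun n _ => smul_comm _ _ _
  have hadd : ∀ (u v : U), φf (u + v) = φf u + φf v := by
    intro u v
    simp only [hφf, smul_add, Finset.sum_add_distrib]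
  -- G-equivariance
  have hGequiv : ∀ (g : G) (u : U), φf (g • u) = g • φf u := by
    intro g u
    simp only [hφf]
    rw [Finset.smul_sum]
    refine Fintype.sum_equiv (MulAut.conjNormal g⁻¹ : MulAut N).toEquiv _ _ fun n => ?_
    rw [← mul_smul, ← mul_smul]
    congr 1
    have hmm : (g : G) * ((MulAut.conjNormal g⁻¹ n : N) : G) = (n : G) * g := by
      rw [MulAut.conjNormal_apply]
      group
    exact hmm.symm
  -- φ lands in fixed points
  have hfix : ∀ u : U, φf u ∈ fixedSubmodule R N U := by
    intro u m
    simp only [hφf]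
    rw [Finset.smul_sum]
    refine Fintype.sum_equiv (Equiv.mulLeft m) _ _ fun n => ?_
    rw [← mul_smul]
    congr 1
  -- key computation through e
  have hφe : ∀ u : U, e (φf u) = fun i => σ * e u i := by
    intro u
    simp only [hφf]
    rw [map_sum]
    funext i
    rw [Finset.sum_apply]
    simp_rw [heq]
    rw [hσ, Finset.sum_mul]
  -- surjectivity computation
  have hsurj : ∀ v : U, v ∈ fixedSubmodule R N U →
      φf (e.symm fun i => MonoidAlgebra.single (1:N) (((e v) i).coeff 1)) = v := by
    intro v hv
    have hconst : ∀ (i : I) (x : N), ((e v) i).coeff x = ((e v) i).coeff 1 := by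
      intro i x
      have h1 : e ((x : G) • v) = e v := by rw [hv x]
      rw [heq] at h1
      have h2 : MonoidAlgebra.single x (1:R) * e v i = e v i := congrFun h1 i
      calc ((e v) i).coeff x = (MonoidAlgebra.single x (1:R) * e v i).coeff x := by rw [h2]
        _ = 1 * (e v i).coeff (x⁻¹ * x) := by rw [MonoidAlgebra.coeff_single_mul_apply]
        _ = ((e v) i).coeff 1 := by rw [inv_mul_cancel, one_mul]
    apply e.injective
    rw [hφe, LinearEquiv.apply_symm_apply]
    funext i
    ext x
    rw [hσ, aux_sigma_mul]
    rw [hconst i x]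
    simp [MonoidAlgebra.coeff_single, Finsupp.single_apply, Finset.sum_ite_eq']
  -- the linear map φ
  let φlin : U →ₗ[R] U :=
    { toFun := φf, map_add' := hadd, map_smul' := hsmul }
  have hφlin : ∀ u, φlin u = φf u := fun _ => rfl
  -- φ is invariant under translation by N
  have htrans : ∀ (n : N) (w : U), φf ((n : G) • w) = φf w := by
    intro n w
    simp only [hφf]
    refine Fintype.sum_equiv (Equiv.mulRight n) _ _ fun m => ?_
    simp only [Equiv.coe_mulRight]
    rw [← mul_smul]
    congr 1
  -- kernel computations
  have hk1 : ∀ u : U, u ∈ augSubmodule R N U → φf u = 0 := by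
    intro u hu
    have hle : augSubmodule R N U ≤ LinearMap.ker φlin := by
      rw [augSubmodule, Submodule.span_le]
      rintro x ⟨n, w, rfl⟩
      rw [SetLike.mem_coe, LinearMap.mem_ker, map_sub, hφlin, hφlin, htrans, sub_self]
    exact hle hu
  have hk2 : ∀ u : U, φf u = 0 → u ∈ augSubmodule R N U := by
    intro u hu
    have haug : ∀ i : I, ∑ m : N, ((e u) i).coeff m = 0 := by
      intro i
      have h0 : e (φf u) = 0 := by rw [hu]; exact map_zero e
      rw [hφe] at h0
      have : σ * e u i = 0 := congrFun h0 i
      calc ∑ m : N, ((e u) i).coeff m = (σ * e u i).coeff 1 := (aux_sigma_mul _ _).symm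
        _ = 0 := by rw [this]; rfl
    have hrepr : u = ∑ n : N,
        ((n : G) • (e.symm fun i => MonoidAlgebra.single (1:N) (((e u) i).coeff n))
          - e.symm fun i => MonoidAlgebra.single (1:N) (((e u) i).coeff n)) := by
      apply e.injective
      rw [map_sum]
      funext i
      rw [Finset.sum_apply]
      have hterm : ∀ n : N,
          (e ((n : G) • (e.symm fun i => MonoidAlgebra.single (1:N) (((e u) i).coeff n))
            - e.symm fun i => MonoidAlgebra.single (1:N) (((e u) i).coeff n))) i
          = MonoidAlgebra.single n (((e u) i).coeff n)
            - MonoidAlgebra.single (1:N) (((e u) i).coeff n) := by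
        intro n
        rw [map_sub, heq, LinearEquiv.apply_symm_apply]
        simp only [Pi.sub_apply]
        rw [MonoidAlgebra.single_mul_single, mul_one, one_mul]
      simp_rw [hterm]
      rw [Finset.sum_sub_distrib]
      rw [aux_repr]
      have : (∑ n : N, MonoidAlgebra.single (1:N) (((e u) i).coeff n))
          = MonoidAlgebra.single (1:N) (∑ n : N, ((e u) i).coeff n) := by
        ext x
        rw [MonoidAlgebra.coeff_sum, Finset.sum_apply']
        simp [MonoidAlgebra.coeff_single, Finsupp.single_apply]
      rw [this, haug i]
      simp
    rw [hrepr]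
    exact Submodule.sum_mem _ fun n _ =>
      Submodule.subset_span ⟨n, _, rfl⟩
  refine ⟨hcont, hsmul, hGequiv, ?_, ?_, ?_⟩
  · -- range = fixed points
    ext u
    constructor
    · rintro ⟨w, rfl⟩
      exact hfix w
    · intro hv
      exact ⟨_, hsurj u hv⟩
  · -- kernel = augmentation submodule
    ext u
    exact ⟨hk2 u, hk1 u⟩
  · -- the induced isomorphism
    let φ' : U →ₗ[R] fixedSubmodule R N U :=
      φlin.codRestrict (fixedSubmodule R N U) hfix
    have hle : augSubmodule R N U ≤ LinearMap.ker φ' := by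
      intro x hx
      rw [LinearMap.mem_ker]
      exact Subtype.ext (hk1 x hx)
    let lift : (U ⧸ augSubmodule R N U) →ₗ[R] fixedSubmodule R N U :=
      Submodule.liftQ (augSubmodule R N U) φ' hle
    have hliftmk : ∀ u : U, lift (Submodule.Quotient.mk u) = ⟨φf u, hfix u⟩ := by
      intro u
      rfl
    have hinj : Function.Injective lift := by
      rw [← LinearMap.ker_eq_bot]
      apply Submodule.ker_liftQ_eq_bot
      intro x hx
      rw [LinearMap.mem_ker] at hx
      exact hk2 x (congrArg Subtype.val hx)
    have hsurjl : Function.Surjective lift := by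
      intro v
      exact ⟨Submodule.Quotient.mk (e.symm fun i => MonoidAlgebra.single (1:N) (((e ↑v) i).coeff 1)),
        Subtype.ext (by rw [hliftmk]; exact hsurj ↑v v.2)⟩
    let e' : (U ⧸ augSubmodule R N U) ≃ₗ[R] fixedSubmodule R N U :=
      LinearEquiv.ofBijective lift ⟨hinj, hsurjl⟩
    have he'mk : ∀ u : U, (e' (Submodule.Quotient.mk u) : U) = φf u := fun u => rfl
    have hmkcont : Continuous ((augSubmodule R N U).mkQ) :=
      (Submodule.isOpenQuotientMap_mkQ _).continuous
    refine ⟨e', ?_, ?_, he'mk, ?_⟩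
    · -- continuity of e'
      rw [(Submodule.isOpenQuotientMap_mkQ (augSubmodule R N U)).isQuotientMap.continuous_iff]
      have : (⇑e' ∘ (augSubmodule R N U).mkQ)
          = fun u : U => (⟨φf u, hfix u⟩ : fixedSubmodule R N U) := by
        funext u
        exact Subtype.ext (he'mk u)
      rw [this]
      exact hcont.subtype_mk _
    · -- continuity of e'.symm
      have hsym : ⇑e'.symm = fun v : fixedSubmodule R N U =>
          Submodule.Quotient.mk (p := augSubmodule R N U)
            (e.symm fun i => MonoidAlgebra.single (1:N) (((e ↑v) i).coeff 1)) := by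
        funext v
        apply e'.injective
        rw [LinearEquiv.apply_symm_apply]
        exact (Subtype.ext (by rw [he'mk]; exact hsurj ↑v v.2)).symm
      rw [hsym]
      exact hmkcont.comp (hesc.comp (continuous_pi fun i =>
        (aux_single_cont (1:N)).comp ((aux_eval_cont (1:N)).comp
          ((continuous_apply i).comp (hec.comp continuous_subtype_val)))))
    · -- G-equivariance
      intro g u
      rw [he'mk, he'mk]
      exact hGequiv g u
end

section
/- Let p be a prime and G a finite p-group. Let {W_s}_{s∈S} be a family of pairwise non-isomorphic finitely generated (hence finite) indecomposable 𝔽_p[G]-modules, each regarded as a discrete topological module. Let κ_s and ν_s (s ∈ S) be cardinals, and suppose that the topological 𝔽_p[G]-module W = ∏_{s∈S} ∏_{κ_s} W_s (with the product topology) is second countable and is topologically isomorphic, as a topological 𝔽_p[G]-module, to ∏_{s∈S} ∏_{ν_s} W_s. Then κ_s = ν_s for every s ∈ S. -/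
open LinearMap

section Alg
variable {R : Type} [Ring R] {V : Type} [AddCommGroup V] [Module R V] [Finite V]

/-- submodule equality from inclusion plus card inequality -/
lemma submod_eq {N P : Submodule R V} (h : N ≤ P) (hc : Nat.card P ≤ Nat.card N) : N = P := by
  apply SetLike.ext'
  refine Set.eq_of_subset_of_ncard_le h ?_ (Set.toFinite _)
  rwa [← Nat.card_coe_set_eq, ← Nat.card_coe_set_eq]

lemma range_pow_antitone (f : Module.End R V) {a b : ℕ} (h : a ≤ b) :
    LinearMap.range (f ^ b) ≤ LinearMap.range (f ^ a) := by
  rintro x ⟨y, rfl⟩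
  exact ⟨(f ^ (b - a)) y, by rw [← Module.End.mul_apply, ← pow_add, Nat.add_sub_cancel' h]⟩

lemma ker_pow_mono (f : Module.End R V) {a b : ℕ} (h : a ≤ b) :
    LinearMap.ker (f ^ a) ≤ LinearMap.ker (f ^ b) := by
  intro x hx
  simp only [LinearMap.mem_ker] at hx ⊢
  have : f ^ b = f ^ (b - a) * f ^ a := by rw [← pow_add, Nat.sub_add_cancel h]
  rw [this, Module.End.mul_apply, hx, map_zero]

/-- Fitting's lemma for finite modules. -/
lemma fitting (f : Module.End R V) :
    ∃ n : ℕ, 0 < n ∧ IsCompl (LinearMap.ker (f ^ n)) (LinearMap.range (f ^ n)) := by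
  set c : ℕ → ℕ := fun n => Nat.card (LinearMap.range (f ^ n)) with hc
  obtain ⟨n₀, hn₀⟩ : ∃ n₀, c n₀ = sInf (Set.range c) := Nat.sInf_mem (Set.range_nonempty c)
  set n := n₀ + 1 with hn
  have hstabr : ∀ m, n ≤ m → LinearMap.range (f ^ m) = LinearMap.range (f ^ n) := by
    intro m hm
    apply submod_eq (range_pow_antitone f hm)
    show c n ≤ c m
    have h1 : c m ≤ c n₀ := Nat.card_le_card_of_injective _
      (Submodule.inclusion_injective (range_pow_antitone f (by omega)))
    have h3 : c n ≤ c n₀ := Nat.card_le_card_of_injective _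
      (Submodule.inclusion_injective (range_pow_antitone f (by omega)))
    have h2 : sInf (Set.range c) ≤ c n := Nat.sInf_le ⟨n, rfl⟩
    have h4 : sInf (Set.range c) ≤ c m := Nat.sInf_le ⟨m, rfl⟩
    omega
  have hcard : ∀ k : ℕ, Nat.card V = Nat.card (LinearMap.ker (f ^ k)) *
      Nat.card (LinearMap.range (f ^ k)) := by
    intro k
    rw [Submodule.card_eq_card_quotient_mul_card (LinearMap.ker (f ^ k))]
    rw [Nat.card_congr (f ^ k).quotKerEquivRange.toEquiv, mul_comm]
  have hstabk : ∀ m, n ≤ m → LinearMap.ker (f ^ m) = LinearMap.ker (f ^ n) := by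
    intro m hm
    symm
    apply submod_eq (ker_pow_mono f hm)
    have h1 := hcard n
    have h2 := hcard m
    have h3 := hstabr m hm
    rw [h3] at h2
    have hpos : 0 < Nat.card (LinearMap.range (f ^ n)) := Nat.card_pos
    have h12 : Nat.card (LinearMap.ker (f ^ n)) * Nat.card (LinearMap.range (f ^ n))
        = Nat.card (LinearMap.ker (f ^ m)) * Nat.card (LinearMap.range (f ^ n)) :=
      h1.symm.trans h2
    exact Nat.le_of_mul_le_mul_right (le_of_eq h12.symm) hpos
  refine ⟨n, by omega, ?_, ?_⟩
  · rw [disjoint_iff]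
    ext x
    simp only [Submodule.mem_inf, Submodule.mem_bot, LinearMap.mem_ker, LinearMap.mem_range]
    constructor
    · rintro ⟨hk, y, rfl⟩
      have h2n : (f ^ (n + n)) y = 0 := by
        rw [pow_add, Module.End.mul_apply]; exact hk
      have : y ∈ LinearMap.ker (f ^ n) := by
        rw [← hstabk (n + n) (by omega)]; exact h2n
      simpa using this
    · rintro rfl
      exact ⟨map_zero _, 0, map_zero _⟩
  · rw [codisjoint_iff_le_sup]
    intro x _
    have : (f ^ n) x ∈ LinearMap.range (f ^ (n + n)) := by
      rw [hstabr (n + n) (by omega)]; exact ⟨x, rfl⟩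
    obtain ⟨z, hz⟩ := this
    refine Submodule.mem_sup.mpr ⟨x - (f ^ n) z, ?_, (f ^ n) z, ⟨z, rfl⟩, by abel⟩
    rw [LinearMap.mem_ker, map_sub]
    rw [pow_add, Module.End.mul_apply] at hz
    rw [hz]
    simp

variable (hV : ∀ A B : Submodule R V, IsCompl A B → A = ⊥ ∨ B = ⊥)

include hV in
lemma bij_or_nilpotent (f : Module.End R V) :
    Function.Bijective f ∨ IsNilpotent f := by
  obtain ⟨n, hn, hcompl⟩ := fitting f
  rcases hV _ _ hcompl with h | h
  · left
    rw [← Finite.injective_iff_bijective]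
    have hker : LinearMap.ker f ≤ LinearMap.ker (f ^ n) := by
      intro x hx
      rw [LinearMap.mem_ker] at hx ⊢
      have : f ^ n = f ^ (n - 1) * f := by
        rw [← pow_succ, Nat.sub_add_cancel hn]
      rw [this, Module.End.mul_apply, hx, map_zero]
    rw [h] at hker
    rw [← LinearMap.ker_eq_bot]
    exact le_bot_iff.mp hker
  · right
    exact ⟨n, LinearMap.range_eq_bot.mp h⟩

include hV in
lemma nonunit_add {f g : Module.End R V} (hf : ¬ IsUnit f) (hg : ¬ IsUnit g) :
    ¬ IsUnit (f + g) := by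
  intro h
  set u := h.unit
  have ha : ¬ IsUnit ((↑u⁻¹ : Module.End R V) * f) := fun hu => hf (by
    have : f = (↑u : Module.End R V) * ((↑u⁻¹ : Module.End R V) * f) := by
      rw [← mul_assoc, u.mul_inv, one_mul]
    rw [this]; exact u.isUnit.mul hu)
  have hb : ¬ IsUnit ((↑u⁻¹ : Module.End R V) * g) := fun hu => hg (by
    have : g = (↑u : Module.End R V) * ((↑u⁻¹ : Module.End R V) * g) := by
      rw [← mul_assoc, u.mul_inv, one_mul]
    rw [this]; exact u.isUnit.mul hu)
  have hsum : (↑u⁻¹ : Module.End R V) * f + (↑u⁻¹ : Module.End R V) * g = 1 := by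
    rw [← mul_add]
    show (↑u⁻¹ : Module.End R V) * ↑u = 1
    exact u.inv_mul
  rcases bij_or_nilpotent hV ((↑u⁻¹ : Module.End R V) * g) with hbij | hnil
  · exact hb (Module.End.isUnit_iff _ |>.mpr hbij)
  · apply ha
    have : (↑u⁻¹ : Module.End R V) * f = 1 - (↑u⁻¹ : Module.End R V) * g := by
      rw [← hsum]; abel
    rw [this]
    exact hnil.isUnit_one_sub

/-- left-composition preserves non-bijectivity -/
lemma nonbij_of_comp_left {f g : Module.End R V} (hf : ¬ Function.Bijective f) :
    ¬ Function.Bijective (g * f) := by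
  intro h
  apply hf
  rw [← Finite.injective_iff_bijective]
  intro x y hxy
  exact h.injective (by simp [Module.End.mul_apply, hxy])

end Alg

section Cross
variable {R : Type} [Ring R] {V U : Type} [AddCommGroup V] [Module R V] [Finite V]
  [AddCommGroup U] [Module R U] [Finite U]

/-- composing through a non-isomorphic indecomposable gives a non-unit -/
lemma cross (hVnt : Nontrivial V)
    (hU : ∀ A B : Submodule R U, IsCompl A B → A = ⊥ ∨ B = ⊥)
    (hniso : IsEmpty (V ≃ₗ[R] U))
    (f : V →ₗ[R] U) (g : U →ₗ[R] V) : ¬ Function.Bijective (g ∘ₗ f) := by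
  intro hb
  set c := LinearEquiv.ofBijective (g ∘ₗ f) hb with hcdef
  set u : U →ₗ[R] V := c.symm.toLinearMap ∘ₗ g with hu
  have huf : ∀ x, u (f x) = x := by
    intro x
    have : g (f x) = c x := rfl
    simp [hu, this]
  have hcompl : IsCompl (LinearMap.range f) (LinearMap.ker u) := by
    constructor
    · rw [disjoint_iff]
      ext y
      simp only [Submodule.mem_inf, LinearMap.mem_range, LinearMap.mem_ker, Submodule.mem_bot]
      constructor
      · rintro ⟨⟨x, rfl⟩, hk⟩
        have := huf x
        rw [hk] at this
        rw [← this, map_zero]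
      · rintro rfl
        exact ⟨⟨0, map_zero _⟩, map_zero _⟩
    · rw [codisjoint_iff_le_sup]
      intro y _
      refine Submodule.mem_sup.mpr ⟨f (u y), ⟨u y, rfl⟩, y - f (u y), ?_, by abel⟩
      rw [LinearMap.mem_ker, map_sub, huf, sub_self]
  rcases hU _ _ hcompl with h | h
  · have hf0 : f = 0 := LinearMap.range_eq_bot.mp h
    obtain ⟨x, hx⟩ := exists_ne (0 : V)
    apply hx
    apply hb.injective
    simp [hf0]
  · have hui : Function.Injective u := LinearMap.ker_eq_bot.mp h
    have hfb : Function.Bijective f := by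
      constructor
      · intro a b hab
        have := huf a
        rw [hab, huf] at this
        exact this.symm
      · intro y
        refine ⟨u y, hui ?_⟩
        rw [huf]
    exact hniso.elim (LinearEquiv.ofBijective f hfb)

end Cross

section Top
variable {S : Type} {κ : S → Type} {W : S → Type}
  [∀ s, AddCommGroup (W s)] [∀ s, TopologicalSpace (W s)] [∀ s, DiscreteTopology (W s)]

/-- basic neighborhoods in the nested product -/
lemma nhds_basic {x : ∀ s, κ s → W s} {O : Set (∀ s, κ s → W s)} (hO : O ∈ nhds x) :
    ∃ (T : Finset S) (T' : ∀ s, Finset (κ s)),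
      ∀ y : ∀ s, κ s → W s, (∀ s ∈ T, ∀ i ∈ T' s, y s i = x s i) → y ∈ O := by
  classical
  rw [nhds_pi, Filter.mem_pi] at hO
  obtain ⟨I, hIfin, t, ht, hsub⟩ := hO
  have hts : ∀ s, ∃ J : Finset (κ s), ∀ y : κ s → W s,
      (∀ i ∈ J, y i = x s i) → y ∈ t s := by
    intro s
    have := ht s
    rw [nhds_pi, Filter.mem_pi] at this
    obtain ⟨I', hI'fin, t', ht', hsub'⟩ := this
    refine ⟨hI'fin.toFinset, fun y hy => hsub' ?_⟩
    intro i hi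
    rw [hy i (hI'fin.mem_toFinset.mpr hi)]
    have := ht' i
    rwa [nhds_discrete, Filter.mem_pure] at this
  choose J hJ using hts
  refine ⟨hIfin.toFinset, J, fun y hy => hsub ?_⟩
  intro s hs
  exact hJ s (y s) (fun i hi => hy s (hIfin.mem_toFinset.mpr hs) i hi)

end Top

section Hom
variable {R : Type} [Ring R] {S : Type} {κ : S → Type} {W : S → Type}
  [∀ s, AddCommGroup (W s)] [∀ s, Module R (W s)]
  [∀ s, TopologicalSpace (W s)] [∀ s, DiscreteTopology (W s)]
  [DecidableEq S] [∀ s, DecidableEq (κ s)]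

/-- the canonical insertion of `W s` at coordinate `(s, i)` -/
noncomputable def ins (s : S) (i : κ s) : W s →ₗ[R] (∀ s, κ s → W s) :=
  (LinearMap.single R (fun s => κ s → W s) s).comp (LinearMap.single R (fun _ : κ s => W s) i)

lemma ins_apply (s : S) (i : κ s) (v : W s) (s' : S) (i' : κ s') :
    ins (R := R) s i v s' i' =
      if h : s = s' then (if i' = h ▸ i then h ▸ v else 0) else 0 := by
  simp only [ins, LinearMap.coe_comp, Function.comp_apply, LinearMap.coe_single]
  by_cases h : s = s'
  · subst h
    simp [Pi.single_apply]
  · rw [dif_neg h, Pi.single_eq_of_ne (Ne.symm h)]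
    rfl

lemma sum_coord (T : Finset S) (T' : ∀ s, Finset (κ s)) (y : ∀ s, κ s → W s)
    {s : S} (hs : s ∈ T) {i : κ s} (hi : i ∈ T' s) :
    (∑ s' ∈ T, ∑ i' ∈ T' s', ins (R := R) s' i' (y s' i')) s i = y s i := by
  rw [Finset.sum_apply, Finset.sum_apply]
  rw [Finset.sum_eq_single_of_mem s hs]
  · rw [Finset.sum_apply, Finset.sum_apply, Finset.sum_eq_single_of_mem i hi]
    · simp [ins_apply]
    · intro j _ hj
      simp [ins_apply, Ne.symm hj]
  · intro s' _ hs'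
    rw [Finset.sum_apply, Finset.sum_apply]
    apply Finset.sum_eq_zero
    intro j _
    simp [ins_apply, hs']

variable {B : Type} [AddCommGroup B] [Module R B] [TopologicalSpace B] [DiscreteTopology B]

/-- a continuous linear map out of the product is a finite sum of coordinate contributions -/
lemma hom_sum (g : (∀ s, κ s → W s) →ₗ[R] B) (hg : Continuous g) :
    ∃ (T : Finset S) (T' : ∀ s, Finset (κ s)),
      ∀ y, g y = ∑ s ∈ T, ∑ i ∈ T' s, g (ins (R := R) s i (y s i)) := by
  have hO : g ⁻¹' {0} ∈ nhds (0 : ∀ s, κ s → W s) := by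
    apply (hg.isOpen_preimage _ (isOpen_discrete _)).mem_nhds
    simp [map_zero]
  obtain ⟨T, T', hT⟩ := nhds_basic hO
  refine ⟨T, T', fun y => ?_⟩
  have hzero : g (y - ∑ s ∈ T, ∑ i ∈ T' s, ins (R := R) s i (y s i)) = 0 := by
    have hmem := hT (y - ∑ s ∈ T, ∑ i ∈ T' s, ins (R := R) s i (y s i)) ?_
    · simpa using hmem
    · intro s hs i hi
      simp only [Pi.sub_apply, Pi.zero_apply]
      rw [sum_coord T T' y hs hi, sub_self]
  rw [map_sub, sub_eq_zero] at hzero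
  rw [hzero, map_sum]
  congr 1
  ext s
  rw [map_sum]

end Hom

section Count
variable {S : Type} {κ : S → Type} {W : S → Type}
  [∀ s, AddCommGroup (W s)] [∀ s, TopologicalSpace (W s)] [∀ s, DiscreteTopology (W s)]

/-- second countability of the product forces each index type to be countable -/
lemma countable_index [SecondCountableTopology (∀ s, κ s → W s)]
    (hnt : ∀ s, Nontrivial (W s)) (s₀ : S) : Countable (κ s₀) := by
  classical
  set M := ∀ s, κ s → W s
  set z : M := 0 with hz
  set U : κ s₀ → Set M := fun i => {x | x s₀ i = 0} with hU
  have hUopen : ∀ i, IsOpen (U i) := by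
    intro i
    have hcont : Continuous (fun x : M => x s₀ i) := (continuous_apply i).comp (continuous_apply s₀)
    exact hcont.isOpen_preimage {0} (isOpen_discrete _)
  have hzU : ∀ i, z ∈ U i := fun i => rfl
  set B := TopologicalSpace.countableBasis M
  have hbasis := TopologicalSpace.isBasis_countableBasis M
  have hchoice : ∀ i : κ s₀, ∃ O ∈ B, z ∈ O ∧ O ⊆ U i := fun i =>
    hbasis.exists_subset_of_mem_open (hzU i) (hUopen i)
  choose O hOB hzO hOU using hchoice
  -- for each basic open O containing z, the set of i with O ⊆ U i is finite
  have hfin : ∀ O' : Set M, z ∈ O' → IsOpen O' → {i : κ s₀ | O' ⊆ U i}.Finite := by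
    intro O' hzO' hO'
    obtain ⟨T, T', hT⟩ := nhds_basic (hO'.mem_nhds hzO')
    apply Set.Finite.subset (T' s₀).finite_toSet
    intro i hi
    by_contra hiT
    obtain ⟨w, hw⟩ := exists_ne (0 : W s₀)
    set y : M := fun s => if h : s = s₀ then (fun j => if h ▸ j = i then h ▸ w else 0) else 0 with hy
    have hyO : y ∈ O' := by
      apply hT
      intro s hs j hj
      simp only [hy]
      by_cases h : s = s₀
      · subst h
        have hji : j ≠ i := fun hji => hiT (hji ▸ hj)
        simp [hji]
        rfl
      · simp [h]
        rfl
    have := hi hyO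
    simp only [hU, Set.mem_setOf_eq, hy] at this
    simp at this
    exact hw this
  have hcover : (Set.univ : Set (κ s₀)) ⊆ ⋃ O' ∈ B, {i | z ∈ O' ∧ O' ⊆ U i} := by
    intro i _
    exact Set.mem_biUnion (hOB i) ⟨hzO i, hOU i⟩
  have hcount : (⋃ O' ∈ B, {i : κ s₀ | z ∈ O' ∧ O' ⊆ U i}).Countable := by
    apply Set.Countable.biUnion (TopologicalSpace.countable_countableBasis M)
    intro O' hO'B
    by_cases hzo : z ∈ O'
    · apply Set.Countable.mono ?_
        ((hfin O' hzo (TopologicalSpace.isOpen_of_mem_countableBasis hO'B)).countable)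
      intro i hi
      exact hi.2
    · have : {i : κ s₀ | z ∈ O' ∧ O' ⊆ U i} = ∅ := by
        ext i; simp [hzo]
      rw [this]
      exact Set.countable_empty
  rw [← Set.countable_univ_iff]
  exact hcount.mono hcover

lemma pow_cancel {c a b : Cardinal} (hc1 : 1 < c) (hcfin : c < Cardinal.aleph0)
    (ha : a ≤ Cardinal.aleph0) (hb : b ≤ Cardinal.aleph0) (h : c ^ a = c ^ b) : a = b := by
  obtain ⟨m, rfl⟩ := Cardinal.lt_aleph0.mp hcfin
  have hm : 2 ≤ m := by exact_mod_cast hc1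
  have hc2 : (2 : Cardinal) ≤ (m : Cardinal) := by exact_mod_cast hm
  have key : ∀ x y : Cardinal, x ≤ Cardinal.aleph0 → y ≤ Cardinal.aleph0 →
      x < Cardinal.aleph0 → ¬ y < Cardinal.aleph0 →
      (m : Cardinal) ^ x = (m : Cardinal) ^ y → False := by
    intro x y hx hy hfx hfy hxy
    have hy' : y = Cardinal.aleph0 := le_antisymm hy (not_lt.mp hfy)
    subst hy'
    have h1 : (m : Cardinal) ^ x < Cardinal.aleph0 :=
      Cardinal.power_lt_aleph0 (Cardinal.nat_lt_aleph0 m) hfx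
    have h2 : Cardinal.aleph0 ≤ (m : Cardinal) ^ Cardinal.aleph0 :=
      le_trans (Cardinal.cantor _).le (Cardinal.power_le_power_right hc2)
    rw [hxy] at h1
    exact absurd h2 (not_le.mpr h1)
  by_cases hfa : a < Cardinal.aleph0 <;> by_cases hfb : b < Cardinal.aleph0
  · obtain ⟨k, rfl⟩ := Cardinal.lt_aleph0.mp hfa
    obtain ⟨l, rfl⟩ := Cardinal.lt_aleph0.mp hfb
    rw [Cardinal.power_natCast, Cardinal.power_natCast, ← Nat.cast_pow, ← Nat.cast_pow] at h
    have hkl : m ^ k = m ^ l := by exact_mod_cast h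
    have := Nat.pow_right_injective hm hkl
    exact_mod_cast this
  · exact absurd (key a b ha hb hfa hfb h) not_false
  · exact absurd (key b a hb ha hfb hfa h.symm) not_false
  · rw [le_antisymm ha (not_lt.mp hfa), le_antisymm hb (not_lt.mp hfb)]
section Wrap
variable {R : Type} [Ring R] {V : Type} [AddCommGroup V] [Module R V]

lemma zero_nonunit (hnt : Nontrivial V) : ¬ IsUnit (0 : Module.End R V) := by
  intro h
  rw [isUnit_zero_iff] at h
  obtain ⟨w, hw⟩ := exists_ne (0 : V)
  apply hw
  have := LinearMap.ext_iff.mp h w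
  simpa using this.symm

lemma nonunit_mul_left [Finite V] {f : Module.End R V} (g : Module.End R V)
    (hf : ¬ IsUnit f) : ¬ IsUnit (g * f) := by
  intro h
  exact nonbij_of_comp_left (f := f) (g := g)
    (fun hb => hf ((Module.End.isUnit_iff f).mpr hb)) ((Module.End.isUnit_iff _).mp h)

lemma cross_nonunit [Finite V] {U : Type} [AddCommGroup U] [Module R U] [Finite U]
    (hVnt : Nontrivial V)
    (hU : ∀ A B : Submodule R U, IsCompl A B → A = ⊥ ∨ B = ⊥)
    (hniso : IsEmpty (V ≃ₗ[R] U))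
    (f : V →ₗ[R] U) (g : U →ₗ[R] V) : ¬ IsUnit (g ∘ₗ f : Module.End R V) := by
  intro h
  exact cross hVnt hU hniso f g ((Module.End.isUnit_iff _).mp h)

end Wrap

section Psi
variable {R : Type} [Ring R] {S : Type} {κ : S → Type} {W : S → Type}
  [∀ s, AddCommGroup (W s)] [∀ s, Module R (W s)] [∀ s, Fintype (W s)]
  [∀ s, TopologicalSpace (W s)] [∀ s, DiscreteTopology (W s)]
  [DecidableEq S] [∀ s, DecidableEq (κ s)]

lemma psi_exists
    (hindec : ∀ s, Nontrivial (W s) ∧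
      ∀ A B : Submodule R (W s), IsCompl A B → A = ⊥ ∨ B = ⊥)
    (s₀ : S)
    (hpair : ∀ s, s ≠ s₀ → IsEmpty ((W s₀) ≃ₗ[R] (W s)))
    (J : AddSubgroup (Module.End R (W s₀)))
    (hJ : ∀ f : Module.End R (W s₀), f ∈ J ↔ ¬ IsUnit f) :
    ∃ ψ : ((W s₀) →ₗ[R] (∀ s, κ s → W s)) →+ (κ s₀ → Module.End R (W s₀) ⧸ J),
      Function.Surjective ψ ∧
      ∀ f, ψ f = 0 ↔ (∀ g : (∀ s, κ s → W s) →ₗ[R] (W s₀), Continuous g →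
        ¬ IsUnit (g ∘ₗ f : Module.End R (W s₀))) := by
  classical
  haveI : ∀ s, Finite (W s) := fun s => Finite.of_fintype _
  set E := Module.End R (W s₀)
  have hadd : ∀ f g : (W s₀) →ₗ[R] (∀ s, κ s → W s),
      (fun i => (QuotientAddGroup.mk ((LinearMap.proj i) ∘ₗ ((LinearMap.proj s₀) ∘ₗ (f + g)))
        : E ⧸ J)) =
      (fun i => (QuotientAddGroup.mk ((LinearMap.proj i) ∘ₗ ((LinearMap.proj s₀) ∘ₗ f))
        : E ⧸ J)) +
      (fun i => (QuotientAddGroup.mk ((LinearMap.proj i) ∘ₗ ((LinearMap.proj s₀) ∘ₗ g))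
        : E ⧸ J)) := by
    intro f g
    funext i
    simp only [LinearMap.comp_add, Pi.add_apply]
    rfl
  refine ⟨AddMonoidHom.mk' (fun f i =>
      (QuotientAddGroup.mk ((LinearMap.proj i) ∘ₗ ((LinearMap.proj s₀) ∘ₗ f)) : E ⧸ J))
      hadd, ?_, ?_⟩
  · -- surjective
    intro h
    have hsurj : Function.Surjective (QuotientAddGroup.mk : E → E ⧸ J) :=
      QuotientAddGroup.mk_surjective
    set r : κ s₀ → E := fun i => Function.surjInv hsurj (h i) with hr
    refine ⟨(LinearMap.single R (fun s => κ s → W s) s₀) ∘ₗ (LinearMap.pi r), ?_⟩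
    funext i
    show QuotientAddGroup.mk ((LinearMap.proj i) ∘ₗ ((LinearMap.proj s₀) ∘ₗ
      ((LinearMap.single R (fun s => κ s → W s) s₀) ∘ₗ (LinearMap.pi r)))) = h i
    have hcomp : (LinearMap.proj i) ∘ₗ ((LinearMap.proj s₀) ∘ₗ
        ((LinearMap.single R (fun s => κ s → W s) s₀) ∘ₗ (LinearMap.pi r))) = r i := by
      ext w
      simp [LinearMap.proj_apply, LinearMap.pi_apply, Pi.single_eq_same]
    rw [hcomp]
    exact Function.surjInv_eq hsurj (h i)
  · -- kernel characterization
    intro f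
    constructor
    · intro hψ g hg
      obtain ⟨T, T', hsum⟩ := hom_sum (R := R) g hg
      have hrw : (g ∘ₗ f : E) = ∑ s ∈ T, ∑ i ∈ T' s,
          (g ∘ₗ ins (R := R) s i) ∘ₗ ((LinearMap.proj i) ∘ₗ ((LinearMap.proj s) ∘ₗ f)) := by
        ext w
        rw [LinearMap.comp_apply]
        rw [hsum (f w)]
        rw [LinearMap.sum_apply]
        refine Finset.sum_congr rfl fun s hs => ?_
        rw [LinearMap.sum_apply]
        refine Finset.sum_congr rfl fun i hi => ?_
        rfl
      rw [hrw]
      have hnt₀ : Nontrivial (W s₀) := (hindec s₀).1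
      refine Finset.sum_induction _ (fun x : E => ¬ IsUnit x)
        (fun a b ha hb => nonunit_add (hindec s₀).2 ha hb) (zero_nonunit hnt₀) ?_
      intro s _
      refine Finset.sum_induction _ (fun x : E => ¬ IsUnit x)
        (fun a b ha hb => nonunit_add (hindec s₀).2 ha hb) (zero_nonunit hnt₀) ?_
      intro i _
      by_cases hss : s = s₀
      · subst hss
        have hi0 : ¬ IsUnit ((LinearMap.proj i) ∘ₗ ((LinearMap.proj s) ∘ₗ f) : E) := by
          have h1 : (QuotientAddGroup.mk ((LinearMap.proj i) ∘ₗ ((LinearMap.proj s) ∘ₗ f))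
              : E ⧸ J) = 0 := congrFun hψ i
          rw [QuotientAddGroup.eq_zero_iff] at h1
          exact (hJ _).mp h1
        exact nonunit_mul_left _ hi0
      · exact cross_nonunit (hindec s₀).1 (hindec s).2 (hpair s hss)
          ((LinearMap.proj i) ∘ₗ ((LinearMap.proj s) ∘ₗ f)) (g ∘ₗ ins (R := R) s i)
    · intro hrad
      funext i
      show QuotientAddGroup.mk ((LinearMap.proj i) ∘ₗ ((LinearMap.proj s₀) ∘ₗ f)) = 0
      rw [QuotientAddGroup.eq_zero_iff, hJ]
      have hg : Continuous ⇑((LinearMap.proj i : _ →ₗ[R] W s₀) ∘ₗ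
          (LinearMap.proj s₀ : (∀ s, κ s → W s) →ₗ[R] (κ s₀ → W s₀))) := by
        show Continuous fun x : ∀ s, κ s → W s => x s₀ i
        exact (continuous_apply i).comp (continuous_apply s₀)
      have := hrad _ hg
      rwa [LinearMap.comp_assoc] at this

end Psi
/-- if a second countable product `W = ∏_{s∈S} ∏_{κ_s} W_s` of pairwise
non-isomorphic finite indecomposable `𝔽_p[G]`-modules (`G` a finite `p`-group, each `W_s`
discrete) is topologically isomorphic, as a topological `𝔽_p[G]`-module, to
`∏_{s∈S} ∏_{ν_s} W_s`, then `κ_s = ν_s` for every `s`. -/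
theorem stmt_7 (p : ℕ) [Fact p.Prime]
    (G : Type) [Group G] [Fintype G] (hG : IsPGroup p G)
    (S : Type) (W : S → Type)
    [∀ s, AddCommGroup (W s)] [∀ s, Module (MonoidAlgebra (ZMod p) G) (W s)]
    [∀ s, Fintype (W s)] [∀ s, TopologicalSpace (W s)] [∀ s, DiscreteTopology (W s)]
    -- each `W_s` is indecomposable
    (hindec : ∀ s, Nontrivial (W s) ∧
      ∀ A B : Submodule (MonoidAlgebra (ZMod p) G) (W s), IsCompl A B → A = ⊥ ∨ B = ⊥)
    -- the `W_s` are pairwise non-isomorphic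
    (hpair : ∀ s t : S, s ≠ t →
      IsEmpty ((W s) ≃ₗ[MonoidAlgebra (ZMod p) G] (W t)))
    (κ ν : S → Type)
    -- `W` is second countable
    (hsc : SecondCountableTopology (∀ s : S, (κ s) → W s))
    -- the two products are topologically isomorphic as topological `𝔽_p[G]`-modules
    (hiso : ∃ e : (∀ s : S, (κ s) → W s) ≃ₗ[MonoidAlgebra (ZMod p) G]
        (∀ s : S, (ν s) → W s),
      Continuous e ∧ Continuous e.symm) :
    ∀ s : S, Nonempty (κ s ≃ ν s) := by
  classical
  obtain ⟨e, he, he'⟩ := hiso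
  intro s₀
  set R := MonoidAlgebra (ZMod p) G with hR
  haveI hsc' : SecondCountableTopology (∀ s : S, (ν s) → W s) := by
    have H : (∀ s : S, (κ s) → W s) ≃ₜ (∀ s : S, (ν s) → W s) :=
      { toEquiv := e.toEquiv, continuous_toFun := he, continuous_invFun := he' }
    exact H.symm.secondCountableTopology
  haveI hcκ : Countable (κ s₀) := countable_index (fun s => (hindec s).1) s₀
  haveI hcν : Countable (ν s₀) := countable_index (fun s => (hindec s).1) s₀
  -- the local endomorphism ring data
  set E := Module.End R (W s₀) with hE
  haveI hntW : Nontrivial (W s₀) := (hindec s₀).1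
  haveI : ∀ s, Finite (W s) := fun s => Finite.of_fintype _
  haveI hEfin : Finite E := Finite.of_injective
    (fun f : E => (f : W s₀ → W s₀)) DFunLike.coe_injective
  set J : AddSubgroup E :=
    { carrier := {f : E | ¬ IsUnit f}
      zero_mem' := zero_nonunit hntW
      add_mem' := fun hf hg => nonunit_add (hindec s₀).2 hf hg
      neg_mem' := fun {f} hf hu => hf (by simpa using hu.neg) } with hJdef
  have hJ : ∀ f : E, f ∈ J ↔ ¬ IsUnit f := fun f => Iff.rfl
  haveI : Finite (E ⧸ J) := Quotient.finite _
  haveI hQnt : Nontrivial (E ⧸ J) := by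
    refine ⟨QuotientAddGroup.mk (1 : E), 0, ?_⟩
    rw [ne_eq, QuotientAddGroup.eq_zero_iff, hJ]
    simp [isUnit_one]
  obtain ⟨ψκ, hψκsurj, hψκker⟩ := psi_exists (κ := κ) hindec s₀
    (fun s hs => hpair s₀ s (Ne.symm hs)) J hJ
  obtain ⟨ψν, hψνsurj, hψνker⟩ := psi_exists (κ := ν) hindec s₀
    (fun s hs => hpair s₀ s (Ne.symm hs)) J hJ
  -- transport along e
  set α : ((W s₀) →ₗ[R] (∀ s, κ s → W s)) ≃+ ((W s₀) →ₗ[R] (∀ s, ν s → W s)) :=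
    { toFun := fun f => e.toLinearMap ∘ₗ f
      invFun := fun f => e.symm.toLinearMap ∘ₗ f
      left_inv := fun f => by ext w; simp
      right_inv := fun f => by ext w; simp
      map_add' := fun f g => by ext w; simp } with hα
  have hmap : AddSubgroup.map α.toAddMonoidHom ψκ.ker = ψν.ker := by
    ext f
    rw [AddSubgroup.mem_map_equiv, AddMonoidHom.mem_ker, AddMonoidHom.mem_ker,
      hψκker, hψνker]
    have hαsymm : α.symm f = e.symm.toLinearMap ∘ₗ f := rfl
    constructor
    · intro h g hg
      have h1 := h (g ∘ₗ e.toLinearMap) (hg.comp he)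
      have h2 : (g ∘ₗ e.toLinearMap) ∘ₗ (α.symm f) = g ∘ₗ f := by
        rw [hαsymm]; ext w; simp
      rwa [h2] at h1
    · intro h g hg
      have h1 := h (g ∘ₗ e.symm.toLinearMap) (hg.comp he')
      have h2 : (g ∘ₗ e.symm.toLinearMap) ∘ₗ f = g ∘ₗ (α.symm f) := by
        rw [hαsymm]; ext w; simp
      rwa [h2] at h1
  have Φ : (κ s₀ → E ⧸ J) ≃+ (ν s₀ → E ⧸ J) :=
    ((QuotientAddGroup.quotientKerEquivOfSurjective ψκ hψκsurj).symm.trans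
      (QuotientAddGroup.congr ψκ.ker ψν.ker α hmap)).trans
      (QuotientAddGroup.quotientKerEquivOfSurjective ψν hψνsurj)
  -- cardinal arithmetic
  have hcard : Cardinal.mk (κ s₀ → E ⧸ J) = Cardinal.mk (ν s₀ → E ⧸ J) :=
    Cardinal.mk_congr Φ.toEquiv
  rw [← Cardinal.power_def, ← Cardinal.power_def] at hcard
  have h1Q : 1 < Cardinal.mk (E ⧸ J) := Cardinal.one_lt_iff_nontrivial.mpr hQnt
  have hQfin : Cardinal.mk (E ⧸ J) < Cardinal.aleph0 := Cardinal.lt_aleph0_iff_finite.mpr ‹_›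
  have := pow_cancel h1Q hQfin Cardinal.mk_le_aleph0 Cardinal.mk_le_aleph0 hcard
  exact Cardinal.eq.mp this
end Count
end

section
/- Let p be a prime, G a finite group, and N a normal subgroup of G. Let U be a ℤ_p[G]-module which, as a ℤ_p[N]-module, is isomorphic to a direct product ∏_{i∈I} ℤ_p[N] of copies of ℤ_p[N]. Then: (i) U^N ∩ I_N U = 0; (ii) |N|·U ⊆ U^N + I_N U; and consequently (iii) the natural map U → U/I_N U ×_{U/(I_N U + U^N)} U/U^N, sending u to the pair (u + I_N U, u + U^N), is an isomorphism of ℤ_p[G]-modules onto the fiber product {(a, b) ∈ U/I_N U × U/U^N : a and b have the same image in U/(I_N U + U^N)}. -/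
set_option synthInstance.maxHeartbeats 400000

/-- for a `ℤ_p[G]`-module `U` that is free as a `ℤ_p[N]`-module
(`N ⊴ G`, `G` finite): (i) `U^N ∩ I_N U = 0`; (ii) `|N|·U ⊆ U^N + I_N U`; and (iii) the
natural map `U → U/I_N U ×_{U/(I_N U + U^N)} U/U^N` is an isomorphism of
`ℤ_p[G]`-modules onto the fiber product. -/
theorem stmt_9 (p : ℕ) [Fact p.Prime]
    (G : Type*) [Group G] [Finite G] (N : Subgroup G) [N.Normal] [Fintype N]
    (U : Type*) [AddCommGroup U] [Module ℤ_[p] U]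
    [DistribMulAction G U] [SMulCommClass G ℤ_[p] U]
    (hfree : ∃ (I : Type) (e : U ≃ₗ[ℤ_[p]] (I → MonoidAlgebra ℤ_[p] N)),
      ∀ (n : N) (u : U), e ((n : G) • u) = fun i => MonoidAlgebra.single n 1 * e u i) :
    fixedSubmodule ℤ_[p] N U ⊓ augSubmodule ℤ_[p] N U = ⊥ ∧
    (∀ u : U, ((Fintype.card N : ℤ_[p]) • u) ∈
        fixedSubmodule ℤ_[p] N U ⊔ augSubmodule ℤ_[p] N U) ∧
    Function.Injective (fun u : U =>
      ((Submodule.Quotient.mk u : U ⧸ augSubmodule ℤ_[p] N U),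
       (Submodule.Quotient.mk u : U ⧸ fixedSubmodule ℤ_[p] N U))) ∧
    Set.range (fun u : U =>
      ((Submodule.Quotient.mk u : U ⧸ augSubmodule ℤ_[p] N U),
       (Submodule.Quotient.mk u : U ⧸ fixedSubmodule ℤ_[p] N U))) =
      {x : (U ⧸ augSubmodule ℤ_[p] N U) × (U ⧸ fixedSubmodule ℤ_[p] N U) |
        Submodule.mapQ (augSubmodule ℤ_[p] N U)
            (augSubmodule ℤ_[p] N U ⊔ fixedSubmodule ℤ_[p] N U) LinearMap.id
            (le_sup_left.trans_eq (Submodule.comap_id _).symm) x.1 =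
          Submodule.mapQ (fixedSubmodule ℤ_[p] N U)
            (augSubmodule ℤ_[p] N U ⊔ fixedSubmodule ℤ_[p] N U) LinearMap.id
            (le_sup_right.trans_eq (Submodule.comap_id _).symm) x.2} := by
  classical
  obtain ⟨I, e, he⟩ := hfree
  have hcard : (Fintype.card N : ℤ_[p]) ≠ 0 :=
    Nat.cast_ne_zero.mpr Fintype.card_ne_zero
  -- the augmentation map
  set ε : MonoidAlgebra ℤ_[p] N →ₐ[ℤ_[p]] ℤ_[p] :=
    (MonoidAlgebra.lift ℤ_[p] ℤ_[p] N) (1 : N →* ℤ_[p])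
    with hε_def
  have hε_single : ∀ (n : N), ε (MonoidAlgebra.single n (1 : ℤ_[p])) = 1 := by
    intro n
    simp [hε_def, MonoidAlgebra.lift_single]
  have hε_sum : ∀ (x : MonoidAlgebra ℤ_[p] N), (∀ g : N, x.coeff g = x.coeff 1) →
      ε x = (Fintype.card N : ℤ_[p]) * x.coeff 1 := by
    intro x hx
    have h1 : ε x = x.coeff.sum fun a b => b • ((1 : N →* ℤ_[p]) a) :=
      MonoidAlgebra.lift_apply _ _
    rw [h1]
    have h2 : (x.coeff.sum fun a b => b • ((1 : N →* ℤ_[p]) a)) = ∑ g : N, x.coeff g := by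
      rw [Finsupp.sum_fintype]
      · simp
      · intro a; simp
    rw [h2]
    calc ∑ g : N, x.coeff g = ∑ _g : N, x.coeff 1 := Finset.sum_congr rfl (fun g _ => hx g)
    _ = (Fintype.card N : ℤ_[p]) * x.coeff 1 := by
        rw [Finset.sum_const, Finset.card_univ, nsmul_eq_mul]
  -- part (i)
  have key : fixedSubmodule ℤ_[p] N U ⊓ augSubmodule ℤ_[p] N U = ⊥ := by
    rw [eq_bot_iff]
    rintro u ⟨hfix, haug⟩
    -- ε vanishes componentwise on augSubmodule
    have hA : ∀ v : U, v ∈ augSubmodule ℤ_[p] N U → ∀ i, ε (e v i) = 0 := by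
      intro v hv
      refine Submodule.span_induction ?_ ?_ ?_ ?_ hv
      · rintro _ ⟨n, w, rfl⟩ i
        have : e ((n : G) • w - w) = e ((n : G) • w) - e w := map_sub e _ _
        rw [this, he n w]
        simp only [Pi.sub_apply]
        rw [map_sub, map_mul, hε_single, one_mul, sub_self]
      · intro i; simp
      · intro a b _ _ ha hb i
        rw [map_add e, Pi.add_apply, map_add, ha i, hb i, add_zero]
      · intro c a _ ha i
        rw [map_smul e, Pi.smul_apply, map_smul, ha i, smul_zero]
    -- components of fixed vectors are constant
    have hB : ∀ i (g : N), (e u i).coeff g = (e u i).coeff 1 := by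
      intro i g
      have h1 := he g u
      rw [hfix g] at h1
      have h2 : MonoidAlgebra.single g (1 : ℤ_[p]) * e u i = e u i :=
        (congrFun h1 i).symm
      have h3 := congrArg (fun f : MonoidAlgebra ℤ_[p] N => f.coeff g) h2
      simp only [MonoidAlgebra.single_mul_apply, one_mul, inv_mul_cancel] at h3
      exact h3.symm
    have hz : ∀ i, e u i = 0 := by
      intro i
      have h0 : ε (e u i) = 0 := hA u haug i
      rw [hε_sum (e u i) (hB i)] at h0
      have h1 : (e u i).coeff 1 = 0 := by
        rcases mul_eq_zero.mp h0 with h | h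
        · exact absurd h hcard
        · exact h
      ext g
      rw [hB i g, h1]
      rfl
    have : e u = 0 := funext hz
    have : u = 0 := by
      have := congrArg e.symm this
      rwa [e.symm_apply_apply, map_zero] at this
    simp [this]
  refine ⟨key, ?_, ?_, ?_⟩
  -- part (ii)
  · intro u
    have h1 : (∑ n : N, (n : G) • u) ∈ fixedSubmodule ℤ_[p] N U := by
      intro n₀
      rw [Finset.smul_sum]
      exact Fintype.sum_equiv (Equiv.mulLeft n₀) _ _
        (fun n => by rw [← mul_smul]; rfl)
    have h2 : ((Fintype.card N : ℤ_[p]) • u - ∑ n : N, (n : G) • u) ∈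
        augSubmodule ℤ_[p] N U := by
      have heq : (Fintype.card N : ℤ_[p]) • u - ∑ n : N, (n : G) • u
          = -∑ n : N, ((n : G) • u - u) := by
        rw [Finset.sum_sub_distrib, Finset.sum_const, Finset.card_univ,
          neg_sub, Nat.cast_smul_eq_nsmul]
      rw [heq]
      refine Submodule.neg_mem _ (Submodule.sum_mem _ fun n _ => ?_)
      exact Submodule.subset_span ⟨n, u, rfl⟩
    refine Submodule.mem_sup.mpr ⟨∑ n : N, (n : G) • u, h1,
      (Fintype.card N : ℤ_[p]) • u - ∑ n : N, (n : G) • u, h2, ?_⟩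
    abel
  -- part (iii): injectivity
  · intro u v huv
    have h1 : u - v ∈ augSubmodule ℤ_[p] N U :=
      (Submodule.Quotient.eq _).mp (congrArg Prod.fst huv)
    have h2 : u - v ∈ fixedSubmodule ℤ_[p] N U :=
      (Submodule.Quotient.eq _).mp (congrArg Prod.snd huv)
    have h3 : u - v ∈ fixedSubmodule ℤ_[p] N U ⊓ augSubmodule ℤ_[p] N U := ⟨h2, h1⟩
    rw [key, Submodule.mem_bot] at h3
    exact sub_eq_zero.mp h3
  -- part (iii): range
  · ext x
    simp only [Set.mem_range, Set.mem_setOf_eq]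
    constructor
    · rintro ⟨u, rfl⟩
      simp [Submodule.mapQ_apply]
    · intro hx
      obtain ⟨x₁, hx₁⟩ := Submodule.Quotient.mk_surjective _ x.1
      obtain ⟨x₂, hx₂⟩ := Submodule.Quotient.mk_surjective _ x.2
      rw [← hx₁, ← hx₂, Submodule.mapQ_apply, Submodule.mapQ_apply] at hx
      have hd : x₁ - x₂ ∈ augSubmodule ℤ_[p] N U ⊔ fixedSubmodule ℤ_[p] N U :=
        (Submodule.Quotient.eq _).mp hx
      obtain ⟨s, hs, t, ht, hst⟩ := Submodule.mem_sup.mp hd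
      refine ⟨x₁ - s, ?_⟩
      have e1 : (Submodule.Quotient.mk (x₁ - s) : U ⧸ augSubmodule ℤ_[p] N U)
          = Submodule.Quotient.mk x₁ := by
        rw [Submodule.Quotient.eq]
        simpa using Submodule.neg_mem _ hs
      have e2 : (Submodule.Quotient.mk (x₁ - s) : U ⧸ fixedSubmodule ℤ_[p] N U)
          = Submodule.Quotient.mk x₂ := by
        rw [Submodule.Quotient.eq]
        have : x₁ - s - x₂ = t := by
          rw [← sub_eq_iff_eq_add'.mpr hst.symm]; abel
        rw [this]; exact ht
      exact Prod.ext (e1.trans hx₁) (e2.trans hx₂)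
end

section
/- Let G be a profinite group (a compact, Hausdorff, totally disconnected topological group) that possesses an open torsion-free subgroup. Then the torsion elements of G have bounded order, and the set of non-trivial torsion elements {g ∈ G : g ≠ 1 and g^m = 1 for some m ≥ 1} is a closed subset of G. -/
/-- A profinite group possessing an open torsion-free subgroup has
torsion elements of bounded order, and its set of non-trivial torsion elements is closed. -/
theorem stmt_10 (G : Type*) [Group G] [TopologicalSpace G] [IsTopologicalGroup G]
    [CompactSpace G] [T2Space G] [TotallyDisconnectedSpace G]
    (H : Subgroup G) (hopen : IsOpen (H : Set G))
    (htf : ∀ h : G, h ∈ H → IsOfFinOrder h → h = 1) :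
    (∃ m : ℕ, 0 < m ∧ ∀ g : G, IsOfFinOrder g → orderOf g ≤ m) ∧
      IsClosed {g : G | g ≠ 1 ∧ IsOfFinOrder g} := by
  have hfin : Finite (G ⧸ H) := H.quotient_finite_of_isOpen hopen
  have hFI : H.FiniteIndex := H.finiteIndex_of_finite_quotient
  set N := H.normalCore with hN
  have hNFI : N.FiniteIndex := H.finiteIndex_normalCore
  set m := N.index with hm
  have hmpos : 0 < m := Nat.pos_of_ne_zero hNFI.index_ne_zero
  -- every torsion element has g^m = 1
  have key : ∀ g : G, IsOfFinOrder g → g ^ m = 1 := by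
    intro g hg
    have hmem : g ^ m ∈ N := N.pow_index_mem g
    have : (g ^ m) = 1 := htf _ (H.normalCore_le hmem) (hg.pow)
    exact this
  constructor
  · refine ⟨m, hmpos, fun g hg => ?_⟩
    exact Nat.le_of_dvd hmpos (orderOf_dvd_of_pow_eq_one (key g hg))
  · have hset : {g : G | g ≠ 1 ∧ IsOfFinOrder g} =
        {g : G | g ^ m = 1} ∩ (H : Set G)ᶜ := by
      ext g
      simp only [Set.mem_setOf_eq, Set.mem_inter_iff, Set.mem_compl_iff, SetLike.mem_coe]
      constructor
      · rintro ⟨hne, hfo⟩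
        exact ⟨key g hfo, fun hmem => hne (htf g hmem hfo)⟩
      · rintro ⟨hpow, hnotH⟩
        have hfo : IsOfFinOrder g := isOfFinOrder_iff_pow_eq_one.mpr ⟨m, hmpos, hpow⟩
        exact ⟨fun h1 => hnotH (h1 ▸ H.one_mem), hfo⟩
    rw [hset]
    exact IsClosed.inter (isClosed_eq (continuous_pow m) continuous_const)
      hopen.isClosed_compl
end

section
/- Let G be a group, U an abelian normal subgroup of G, and K a subgroup of G such that G = UK and U ∩ K = 1 (so that G is the internal semidirect product of U by K). Then the normal closure K_G of K in G equals ⁅U, K⁆·K, where ⁅U, K⁆ is the subgroup generated by all commutators [u, k] with u ∈ U and k ∈ K; in particular K_G ∩ U = ⁅U, K⁆, and the composite U ↪ G → G/K_G is a surjective homomorphism with kernel ⁅U, K⁆, inducing an isomorphism U/⁅U, K⁆ ≅ G/K_G. -/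
/-- If `G = U ⋊ K` internally with `U` abelian normal and `K` a subgroup,
then the normal closure `K_G` of `K` equals `⁅U, K⁆ ⊔ K`, `K_G ∩ U = ⁅U, K⁆`, and the
composite `U ↪ G → G/K_G` is surjective with kernel `⁅U, K⁆`, inducing
`U/⁅U, K⁆ ≅ G/K_G`. -/
theorem stmt_11 (G : Type*) [Group G] (U K : Subgroup G) [U.Normal]
    (hUcomm : ∀ a b : G, a ∈ U → b ∈ U → a * b = b * a)
    (hprod : U ⊔ K = ⊤) (hint : U ⊓ K = ⊥) :
    Subgroup.normalClosure (K : Set G) = ⁅U, K⁆ ⊔ K ∧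
    Subgroup.normalClosure (K : Set G) ⊓ U = ⁅U, K⁆ ∧
    Function.Surjective
      ((QuotientGroup.mk' (Subgroup.normalClosure (K : Set G))).comp U.subtype) ∧
    ((QuotientGroup.mk' (Subgroup.normalClosure (K : Set G))).comp U.subtype).ker
      = ⁅U, K⁆.subgroupOf U := by
  set C : Subgroup G := ⁅U, K⁆ with hC
  have hCU : C ≤ U := Subgroup.commutator_le_left U K
  -- every element of G decomposes as u * k
  have hdecomp : ∀ g : G, ∃ u ∈ U, ∃ k ∈ K, g = u * k := by
    intro g
    have hg : g ∈ (↑(U ⊔ K) : Set G) := by rw [hprod]; trivial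
    rw [Subgroup.normal_mul] at hg
    obtain ⟨u, hu, k, hk, rfl⟩ := hg
    exact ⟨u, hu, k, hk, rfl⟩
  -- conjugation by elements of K preserves C
  have hconjK : ∀ k ∈ K, ∀ n ∈ C, k * n * k⁻¹ ∈ C := by
    intro k hk n hn
    have h1 : Subgroup.map (MulAut.conj k).toMonoidHom U ≤ U := by
      rintro x ⟨y, hy, rfl⟩
      exact Subgroup.Normal.conj_mem ‹U.Normal› y hy k
    have h2 : Subgroup.map (MulAut.conj k).toMonoidHom K ≤ K := by
      rintro x ⟨y, hy, rfl⟩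
      simpa using K.mul_mem (K.mul_mem hk hy) (K.inv_mem hk)
    have hmap : Subgroup.map (MulAut.conj k).toMonoidHom C ≤ C := by
      rw [hC, Subgroup.map_commutator]
      exact Subgroup.commutator_mono h1 h2
    have : (MulAut.conj k).toMonoidHom n ∈ C :=
      hmap (Subgroup.mem_map_of_mem _ hn)
    simpa using this
  -- conjugation by elements of U fixes C pointwise
  have hconjU : ∀ u ∈ U, ∀ n ∈ C, u * n * u⁻¹ = n := by
    intro u hu n hn
    have : u * n = n * u := hUcomm u n hu (hCU hn)
    rw [this, mul_assoc, mul_inv_cancel, mul_one]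
  have hCnormal : C.Normal := by
    constructor
    intro n hn g
    obtain ⟨u, hu, k, hk, rfl⟩ := hdecomp g
    have h1 : k * n * k⁻¹ ∈ C := hconjK k hk n hn
    have h2 : u * (k * n * k⁻¹) * u⁻¹ ∈ C := by
      rw [hconjU u hu _ h1]; exact h1
    have : (u * k) * n * (u * k)⁻¹ = u * (k * n * k⁻¹) * u⁻¹ := by
      rw [mul_inv_rev]; group
    rw [this]; exact h2
  haveI := hCnormal
  -- C ⊔ K is normal
  have hsupNormal : (C ⊔ K).Normal := by
    constructor
    intro n hn g
    -- decompose n = c * k₀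
    have hn' : n ∈ (↑(C ⊔ K) : Set G) := hn
    rw [Subgroup.normal_mul] at hn'
    obtain ⟨c, hc, k₀, hk₀, rfl⟩ := hn'
    obtain ⟨u, hu, k, hk, rfl⟩ := hdecomp g
    -- conjugation by k first
    have hck : k * c * k⁻¹ ∈ C := hconjK k hk c hc
    have hkk : k * k₀ * k⁻¹ ∈ K := K.mul_mem (K.mul_mem hk hk₀) (K.inv_mem hk)
    -- conjugation by u : u * x * u⁻¹ for x = c' * k' with c' ∈ C, k' ∈ K
    have key : ∀ c' ∈ C, ∀ k' ∈ K, u * (c' * k') * u⁻¹ ∈ C ⊔ K := by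
      intro c' hc' k' hk'
      have h1 : u * (c' * k') * u⁻¹ = c' * (u * k' * u⁻¹) := by
        have : u * c' = c' * u := hUcomm u c' hu (hCU hc')
        calc u * (c' * k') * u⁻¹ = (u * c') * k' * u⁻¹ := by group
          _ = (c' * u) * k' * u⁻¹ := by rw [this]
          _ = c' * (u * k' * u⁻¹) := by group
      open scoped commutatorElement in
      have h2 : u * k' * u⁻¹ = ⁅u, k'⁆ * k' := by
        rw [commutatorElement_def]; group
      open scoped commutatorElement in
      have h3 : ⁅u, k'⁆ ∈ C := Subgroup.commutator_mem_commutator hu hk'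
      rw [h1, h2, ← mul_assoc]
      exact Subgroup.mul_mem _
        (Subgroup.mem_sup_left (C.mul_mem hc' h3)) (Subgroup.mem_sup_right hk')
    have hstep : (u * k) * (c * k₀) * (u * k)⁻¹
        = u * ((k * c * k⁻¹) * (k * k₀ * k⁻¹)) * u⁻¹ := by
      rw [mul_inv_rev]; group
    rw [hstep]
    exact key _ hck _ hkk
  haveI := hsupNormal
  -- K ≤ normal closure, C ≤ normal closure
  have hKN : K ≤ Subgroup.normalClosure (K : Set G) := Subgroup.le_normalClosure
  have hCN : C ≤ Subgroup.normalClosure (K : Set G) := by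
    rw [hC]
    rw [Subgroup.commutator_le]
    intro u hu k hk
    rw [commutatorElement_def]
    have h1 : u * k * u⁻¹ ∈ Subgroup.normalClosure (K : Set G) :=
      Subgroup.Normal.conj_mem (Subgroup.normalClosure_normal) k (hKN hk) u
    exact Subgroup.mul_mem _ h1 (Subgroup.inv_mem _ (hKN hk))
  have eq1 : Subgroup.normalClosure (K : Set G) = C ⊔ K := by
    apply le_antisymm
    · exact Subgroup.normalClosure_le_normal (fun x hx => Subgroup.mem_sup_right hx)
    · exact sup_le hCN hKN
  have eq2 : Subgroup.normalClosure (K : Set G) ⊓ U = C := by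
    apply le_antisymm
    · rintro x ⟨hxN, hxU⟩
      rw [eq1] at hxN
      have hx' : x ∈ (↑(C ⊔ K) : Set G) := hxN
      rw [Subgroup.normal_mul] at hx'
      obtain ⟨c, hc, k, hk, rfl⟩ := hx'
      have hkU : k ∈ U := by
        have : c⁻¹ * (c * k) ∈ U := U.mul_mem (U.inv_mem (hCU hc)) hxU
        simpa using this
      have : k ∈ U ⊓ K := ⟨hkU, hk⟩
      rw [hint, Subgroup.mem_bot] at this
      simpa [this] using hc
    · exact le_inf hCN hCU
  refine ⟨eq1, eq2, ?_, ?_⟩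
  · intro q
    obtain ⟨g, rfl⟩ := QuotientGroup.mk'_surjective (Subgroup.normalClosure (K : Set G)) q
    obtain ⟨u, hu, k, hk, rfl⟩ := hdecomp g
    refine ⟨⟨u, hu⟩, ?_⟩
    show QuotientGroup.mk' _ u = QuotientGroup.mk' _ (u * k)
    rw [QuotientGroup.mk'_eq_mk']
    exact ⟨k, hKN hk, rfl⟩
  · ext ⟨x, hx⟩
    rw [MonoidHom.mem_ker, Subgroup.mem_subgroupOf]
    show QuotientGroup.mk' _ x = 1 ↔ _
    rw [QuotientGroup.mk'_apply, QuotientGroup.eq_one_iff]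
    constructor
    · intro h
      have : x ∈ Subgroup.normalClosure (K : Set G) ⊓ U := ⟨h, hx⟩
      rwa [eq2] at this
    · intro h
      exact hCN h
end

section
/- Let p be a prime, G a finite p-group, and H, K subgroups of G. Then the cyclic permutation module ℤ_p[G/H] is an indecomposable ℤ_p[G]-module, and ℤ_p[G/H] is isomorphic to ℤ_p[G/K] as a ℤ_p[G]-module if and only if H and K are conjugate in G. In particular, the isomorphism classes of indecomposable finitely generated permutation ℤ_p[G]-modules are in bijection with the conjugacy classes of subgroups of G. -/
open MulAction Module

section helpers

variable {p : ℕ} [Fact p.Prime]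

/-- Sum of an invariant function over a finite set with a fixed-point-free
action of a finite `p`-group is divisible by `p`. -/
lemma helper_sum_dvd {Γ : Type} [Group Γ] [Finite Γ] (hΓ : IsPGroup p Γ)
    {Y : Type} [Fintype Y] [MulAction Γ Y]
    (hfix : ∀ y : Y, ∃ γ : Γ, γ • y ≠ y)
    (v : Y → ℤ_[p]) (hv : ∀ (γ : Γ) (y : Y), v (γ • y) = v y) :
    (p : ℤ_[p]) ∣ ∑ y, v y := by
  classical
  cases nonempty_fintype Γ
  obtain ⟨m, hm⟩ := IsPGroup.iff_card.mp hΓ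
  rw [Finset.sum_partition (MulAction.orbitRel Γ Y)]
  apply Finset.dvd_sum
  intro q hq
  obtain ⟨y₀, _, rfl⟩ := Finset.mem_image.mp hq
  have hset : (Finset.univ.filter fun y => ⟦y⟧ = (⟦y₀⟧ : Quotient (MulAction.orbitRel Γ Y)))
      = (MulAction.orbit Γ y₀).toFinset := by
    ext y
    simp [Quotient.eq, MulAction.orbitRel_apply]
  rw [hset]
  have hconst : ∀ y ∈ (MulAction.orbit Γ y₀).toFinset, v y = v y₀ := by
    intro y hy
    rw [Set.mem_toFinset] at hy
    obtain ⟨γ, rfl⟩ := hy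
    exact hv γ y₀
  rw [Finset.sum_congr rfl hconst, Finset.sum_const, Set.toFinset_card]
  have hdvd : Fintype.card (MulAction.orbit Γ y₀) ∣ p ^ m := by
    rw [← hm, Nat.card_eq_fintype_card (α := Γ)]
    exact Dvd.intro _ (MulAction.card_orbit_mul_card_stabilizer_eq_card_group Γ y₀)
  obtain ⟨k, hk, hcard⟩ := (Nat.dvd_prime_pow (Fact.out : p.Prime)).mp hdvd
  have hk0 : k ≠ 0 := by
    intro h
    rw [h, pow_zero] at hcard
    obtain ⟨γ, hγ⟩ := hfix y₀
    have h1 : Subsingleton (MulAction.orbit Γ y₀) := Fintype.card_le_one_iff_subsingleton.mp hcard.le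
    have := Subsingleton.elim (⟨γ • y₀, MulAction.mem_orbit _ _⟩ : MulAction.orbit Γ y₀)
      ⟨y₀, MulAction.mem_orbit_self _⟩
    exact hγ (congrArg Subtype.val this)
  have : (p : ℕ) ∣ Fintype.card (MulAction.orbit Γ y₀) := by
    rw [hcard]
    exact dvd_pow_self p hk0
  obtain ⟨c, hc⟩ := this
  rw [hc, nsmul_eq_mul]
  push_cast
  exact ⟨c * v y₀, by ring⟩

end helpers

section fixedpt
variable {p : ℕ} [Fact p.Prime]

lemma helper_fixed {G : Type} [Group G] [Fintype G] (hG : IsPGroup p G) (H K : Subgroup G)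
    (e : (G ⧸ H → ℤ_[p]) ≃ₗ[ℤ_[p]] (G ⧸ K → ℤ_[p]))
    (he : ∀ (g : G) (f : G ⧸ H → ℤ_[p]), e (fun x => f (g⁻¹ • x)) = fun y => e f (g⁻¹ • y)) :
    ∃ y : G ⧸ K, ∀ h ∈ H, h • y = y := by
  classical
  haveI : Fintype (G ⧸ H) := Fintype.ofFinite _
  haveI : Fintype (G ⧸ K) := Fintype.ofFinite _
  by_contra hfix
  push_neg at hfix
  set x₀ : G ⧸ H := ((1 : G) : G ⧸ H) with hx₀def
  have hx₀ : ∀ h ∈ H, h • x₀ = x₀ := by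
    intro h hh
    show ((h * 1 : G) : G ⧸ H) = ((1 : G) : G ⧸ H)
    rw [QuotientGroup.eq]
    simpa using hh
  -- e.symm is equivariant too
  have hsymm : ∀ (g : G) (f' : G ⧸ K → ℤ_[p]),
      e.symm (fun z => f' (g⁻¹ • z)) = fun x => e.symm f' (g⁻¹ • x) := by
    intro g f'
    apply e.injective
    rw [he g (e.symm f'), e.apply_symm_apply, e.apply_symm_apply]
  set f₀ : G ⧸ H → ℤ_[p] := fun x => if x = x₀ then 1 else 0 with hf₀
  set u : G ⧸ K → ℤ_[p] := e f₀ with hu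
  set w : (G ⧸ K) → ℤ_[p] := fun y => e.symm (fun z => if y = z then 1 else 0) x₀ with hw
  -- key identity
  have key : (1 : ℤ_[p]) = ∑ y : G ⧸ K, u y * w y := by
    have h1 : e.symm u = f₀ := e.symm_apply_apply f₀
    have h2 : u = ∑ y : G ⧸ K, u y • fun z => if y = z then (1 : ℤ_[p]) else 0 :=
      pi_eq_sum_univ u
    calc (1 : ℤ_[p]) = f₀ x₀ := by simp [hf₀]
      _ = e.symm u x₀ := by rw [h1]
      _ = ∑ y : G ⧸ K, u y * w y := by
          conv_lhs => rw [h2]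
          rw [map_sum]
          simp only [map_smul]
          rw [Finset.sum_apply]
          simp [hw, smul_eq_mul]
  -- invariance of u and w
  have hu_inv : ∀ (h : G), h ∈ H → ∀ y, u (h • y) = u y := by
    intro h hh y
    have hf₀inv : (fun x => f₀ (h⁻¹ • x)) = f₀ := by
      funext x
      simp only [hf₀]
      congr 1
      rw [inv_smul_eq_iff, hx₀ h hh]
    have := he h f₀
    rw [hf₀inv] at this
    have h3 : ∀ y, u y = u (h⁻¹ • y) := fun y => congrFun this y
    have h4 := h3 (h • y)
    rw [inv_smul_smul] at h4
    exact h4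
  have hw_inv : ∀ (h : G), h ∈ H → ∀ y, w (h • y) = w y := by
    intro h hh y
    have hδ : (fun z => if h • y = z then (1:ℤ_[p]) else 0)
        = fun z => (fun z' => if y = z' then (1:ℤ_[p]) else 0) (h⁻¹ • z) := by
      funext z
      congr 1
      rw [eq_iff_iff, eq_inv_smul_iff]
    have hinv : h⁻¹ • x₀ = x₀ := hx₀ h⁻¹ (H.inv_mem hh)
    have h4 := congrFun (hsymm h (fun z' => if y = z' then (1:ℤ_[p]) else 0)) x₀
    simp only [hw]
    rw [hδ, h4, hinv]
  -- apply the divisibility helper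
  have hdvd : (p : ℤ_[p]) ∣ ∑ y : G ⧸ K, u y * w y := by
    apply helper_sum_dvd (IsPGroup.to_subgroup hG H)
    · intro y
      obtain ⟨h, hh, hne⟩ := hfix y
      exact ⟨⟨h, hh⟩, hne⟩
    · rintro ⟨h, hh⟩ y
      have : (⟨h, hh⟩ : H) • y = h • y := rfl
      rw [this, hu_inv h hh, hw_inv h hh]
  rw [← key] at hdvd
  have : IsUnit (p : ℤ_[p]) := isUnit_of_dvd_one hdvd
  rw [PadicInt.isUnit_iff, PadicInt.norm_p] at this
  have hp2 : 2 ≤ p := (Fact.out : p.Prime).two_le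
  have : (p : ℝ) = 1 := by
    field_simp at this
    linarith [this]
  have : p = 1 := by exact_mod_cast this
  omega

end fixedpt

section indec
variable {p : ℕ} [Fact p.Prime]

set_option maxHeartbeats 1000000 in
lemma helper_indec {G : Type} [Group G] [Fintype G]
    (hG : IsPGroup p G) (H : Subgroup G)
    (A B : Submodule ℤ_[p] (G ⧸ H → ℤ_[p]))
    (hA : ∀ g : G, ∀ f ∈ A, (fun x => f (g⁻¹ • x)) ∈ A)
    (hB : ∀ g : G, ∀ f ∈ B, (fun x => f (g⁻¹ • x)) ∈ B)
    (hc : IsCompl A B) : A = ⊥ ∨ B = ⊥ := by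
  classical
  haveI : Fintype (G ⧸ H) := Fintype.ofFinite _
  -- instances for submodules
  haveI hnzA : NoZeroSMulDivisors ℤ_[p] ↥A := by
    constructor
    rintro c ⟨a, ha⟩ hca
    have : c • a = 0 := congrArg Subtype.val hca
    rcases smul_eq_zero.mp this with h | h
    · exact Or.inl h
    · exact Or.inr (Subtype.ext h)
  haveI hnzB : NoZeroSMulDivisors ℤ_[p] ↥B := by
    constructor
    rintro c ⟨a, ha⟩ hca
    have : c • a = 0 := congrArg Subtype.val hca
    rcases smul_eq_zero.mp this with h | h
    · exact Or.inl h
    · exact Or.inr (Subtype.ext h)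
  haveI hfinA : Module.Finite ℤ_[p] ↥A :=
    Module.Finite.iff_fg.mpr (IsNoetherian.noetherian A)
  haveI hfinB : Module.Finite ℤ_[p] ↥B :=
    Module.Finite.iff_fg.mpr (IsNoetherian.noetherian B)
  haveI : Module.Free ℤ_[p] ↥A := Module.free_of_finite_type_torsion_free'
  haveI : Module.Free ℤ_[p] ↥B := Module.free_of_finite_type_torsion_free'
  set M := (G ⧸ H → ℤ_[p])
  set π : M →ₗ[ℤ_[p]] M := A.subtype ∘ₗ A.projectionOnto B hc with hπdef
  have hπA : ∀ a ∈ A, π a = a := by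
    intro a ha
    show A.subtype (A.projectionOnto B hc a) = a
    rw [show a = ((⟨a, ha⟩ : ↥A) : M) from rfl, Submodule.projectionOnto_apply_left hc]
    rfl
  have hπB : ∀ b ∈ B, π b = 0 := by
    intro b hb
    show A.subtype (A.projectionOnto B hc b) = 0
    rw [show b = ((⟨b, hb⟩ : ↥B) : M) from rfl, Submodule.projectionOnto_apply_right hc]
    rfl
  have hdec : ∀ f : M, ∃ a ∈ A, ∃ b ∈ B, f = a + b := by
    intro f
    have hf : f ∈ A ⊔ B := by rw [hc.sup_eq_top]; trivial
    obtain ⟨a, ha, b, hb, hab⟩ := Submodule.mem_sup.mp hf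
    exact ⟨a, ha, b, hb, hab.symm⟩
  have hπ_equiv : ∀ (g : G) (f : M), π (fun x => f (g⁻¹ • x)) = fun x => π f (g⁻¹ • x) := by
    intro g f
    obtain ⟨a, ha, b, hb, rfl⟩ := hdec f
    have hsplit : (fun x => (a + b) (g⁻¹ • x)) =
        (fun x => a (g⁻¹ • x)) + (fun x => b (g⁻¹ • x)) := rfl
    rw [hsplit, map_add, hπA _ (hA g a ha), hπB _ (hB g b hb), add_zero,
      map_add, hπA a ha, hπB b hb, add_zero]
  set x₀ : G ⧸ H := ((1 : G) : G ⧸ H) with hx₀def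
  set t : ℤ_[p] := π (Pi.single x₀ 1) x₀ with htdef
  have hdiag : ∀ x : G ⧸ H, π (Pi.single x 1) x = t := by
    intro x
    obtain ⟨g, rfl⟩ := QuotientGroup.mk_surjective x
    have h1 : (Pi.single ((g : G) : G ⧸ H) (1:ℤ_[p]) : M) =
        fun z => (Pi.single x₀ (1:ℤ_[p]) : M) (g⁻¹ • z) := by
      funext z
      rw [Pi.single_apply, Pi.single_apply]
      congr 1
      rw [eq_iff_iff, inv_smul_eq_iff]
      have : g • x₀ = ((g : G) : G ⧸ H) := by
        show ((g * 1 : G) : G ⧸ H) = ((g : G) : G ⧸ H)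
        rw [mul_one]
      rw [this]
    rw [h1, hπ_equiv g]
    show π (Pi.single x₀ 1) (g⁻¹ • ((g:G) : G ⧸ H)) = t
    have : g⁻¹ • ((g:G) : G ⧸ H) = x₀ := by
      show ((g⁻¹ * g : G) : G ⧸ H) = ((1 : G) : G ⧸ H)
      rw [inv_mul_cancel]
    rw [this]
  have htr : LinearMap.trace ℤ_[p] M π = (Fintype.card (G ⧸ H) : ℤ_[p]) * t := by
    rw [LinearMap.trace_eq_matrix_trace ℤ_[p] (Pi.basisFun ℤ_[p] (G ⧸ H)) π]
    rw [Matrix.trace]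
    have : ∀ x : G ⧸ H, ((LinearMap.toMatrix (Pi.basisFun ℤ_[p] (G ⧸ H))
        (Pi.basisFun ℤ_[p] (G ⧸ H))) π).diag x = t := by
      intro x
      rw [Matrix.diag_apply, LinearMap.toMatrix_apply, Pi.basisFun_repr, Pi.basisFun_apply]
      exact hdiag x
    rw [Finset.sum_congr rfl (fun x _ => this x), Finset.sum_const, nsmul_eq_mul]
    simp
  -- trace = finrank A
  set E := Submodule.prodEquivOfIsCompl A B hc with hEdef
  have hconj : E.symm.conj π = LinearMap.prodMap LinearMap.id 0 := by
    apply LinearMap.ext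
    rintro ⟨a, b⟩
    rw [LinearEquiv.conj_apply]
    show E.symm (π (E.symm.symm (a, b))) = (a, 0)
    rw [LinearEquiv.symm_symm]
    have hE : E (a, b) = (a : M) + (b : M) := by
      rw [hEdef]
      rfl
    rw [hE, map_add, hπA _ a.2, hπB _ b.2, add_zero]
    rw [LinearEquiv.symm_apply_eq]
    have : E (a, (0 : ↥B)) = (a : M) + ((0 : ↥B) : M) := rfl
    rw [this]
    simp
  have htrA : LinearMap.trace ℤ_[p] M π = (Module.finrank ℤ_[p] ↥A : ℤ_[p]) := by
    have h2 := LinearMap.trace_conj' π E.symm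
    rw [hconj] at h2
    rw [← h2, LinearMap.trace_prodMap', LinearMap.trace_id, map_zero, add_zero]
  -- rank additivity
  have hrank : Module.finrank ℤ_[p] ↥A + Module.finrank ℤ_[p] ↥B = Fintype.card (G ⧸ H) := by
    rw [← Module.finrank_prod, E.finrank_eq, Module.finrank_pi]
  -- card (G ⧸ H) is a power of p
  obtain ⟨m, hm⟩ := IsPGroup.iff_card.mp hG
  have hdvdcard : Fintype.card (G ⧸ H) ∣ p ^ m := by
    refine ⟨Nat.card ↥H, ?_⟩
    rw [← hm, Subgroup.card_eq_card_quotient_mul_card_subgroup H, Nat.card_eq_fintype_card]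
  obtain ⟨k, _, hcard⟩ := (Nat.dvd_prime_pow (Fact.out : p.Prime)).mp hdvdcard
  -- conclude
  by_contra hbot
  push_neg at hbot
  obtain ⟨hA0, hB0⟩ := hbot
  have hApos : 0 < Module.finrank ℤ_[p] ↥A := by
    rcases Nat.eq_zero_or_pos (Module.finrank ℤ_[p] ↥A) with h | h
    · exfalso
      haveI := Module.finrank_zero_iff.mp h
      apply hA0
      rw [Submodule.eq_bot_iff]
      intro a ha
      exact congrArg Subtype.val (Subsingleton.elim (⟨a, ha⟩ : ↥A) 0)
    · exact h
  have hBpos : 0 < Module.finrank ℤ_[p] ↥B := by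
    rcases Nat.eq_zero_or_pos (Module.finrank ℤ_[p] ↥B) with h | h
    · exfalso
      haveI := Module.finrank_zero_iff.mp h
      apply hB0
      rw [Submodule.eq_bot_iff]
      intro a ha
      exact congrArg Subtype.val (Subsingleton.elim (⟨a, ha⟩ : ↥B) 0)
    · exact h
  set r := Module.finrank ℤ_[p] ↥A with hrdef
  rw [hcard] at hrank
  have hrlt : r < p ^ k := by omega
  have hdvd : ((p : ℤ_[p])) ^ k ∣ (r : ℤ_[p]) := by
    refine ⟨t, ?_⟩
    have h3 : (r : ℤ_[p]) = (Fintype.card (G ⧸ H) : ℤ_[p]) * t := by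
      rw [← htr, htrA]
    rw [h3, hcard]
    push_cast
    ring
  obtain ⟨t', ht'⟩ := hdvd
  have hnorm : ‖((r : ℤ) : ℤ_[p])‖ ≤ (p : ℝ) ^ (-(k : ℤ)) := by
    have h4 : ((r : ℤ) : ℤ_[p]) = (r : ℤ_[p]) := by push_cast; rfl
    rw [h4, ht', norm_mul, norm_pow, PadicInt.norm_p, zpow_neg, zpow_natCast, ← inv_pow]
    have h5 : (0:ℝ) < ((p:ℝ)⁻¹) ^ k := by
      apply pow_pos
      rw [inv_pos]
      exact_mod_cast (Fact.out : p.Prime).pos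
    calc ((p:ℝ)⁻¹) ^ k * ‖t'‖ ≤ ((p:ℝ)⁻¹) ^ k * 1 :=
          mul_le_mul_of_nonneg_left (PadicInt.norm_le_one t') h5.le
      _ = ((p:ℝ)⁻¹) ^ k := mul_one _
  have h6 : ((p : ℤ)) ^ k ∣ (r : ℤ) := PadicInt.norm_int_le_pow_iff_dvd.mp hnorm
  have h7 : p ^ k ∣ r := by exact_mod_cast h6
  have := Nat.le_of_dvd hApos h7
  omega

end indec

section conj
variable {p : ℕ} [Fact p.Prime]

lemma helper_conj {G : Type} [Group G] (H K : Subgroup G) (g : G)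
    (hk : Subgroup.map (MulAut.conj g).toMonoidHom H = K) :
    ∃ e : (G ⧸ H → ℤ_[p]) ≃ₗ[ℤ_[p]] (G ⧸ K → ℤ_[p]),
      ∀ (a : G) (f : G ⧸ H → ℤ_[p]), e (fun x => f (a⁻¹ • x)) = fun y => e f (a⁻¹ • y) := by
  have hmem : ∀ x : G, x ∈ K ↔ g⁻¹ * x * g ∈ H := by
    intro x
    rw [← hk]
    constructor
    · rintro ⟨h, hh, rfl⟩
      simpa [MulAut.conj_apply, mul_assoc] using hh
    · intro hx
      exact ⟨g⁻¹ * x * g, hx, by simp [MulAut.conj_apply, mul_assoc]⟩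
  -- the equivariant bijection of coset spaces
  have hresp1 : ∀ a b : G, (QuotientGroup.leftRel H) a b →
      (((a * g⁻¹ : G)) : G ⧸ K) = ((b * g⁻¹ : G) : G ⧸ K) := by
    intro a b hab
    rw [QuotientGroup.leftRel_apply] at hab
    rw [QuotientGroup.eq, hmem]
    simpa [mul_assoc] using hab
  have hresp2 : ∀ a b : G, (QuotientGroup.leftRel K) a b →
      (((a * g : G)) : G ⧸ H) = ((b * g : G) : G ⧸ H) := by
    intro a b hab
    rw [QuotientGroup.leftRel_apply] at hab
    rw [QuotientGroup.eq]
    rw [hmem] at hab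
    simpa [mul_assoc] using hab
  let τ : G ⧸ H ≃ G ⧸ K :=
    { toFun := fun q => Quotient.liftOn' q (fun x => ((x * g⁻¹ : G) : G ⧸ K))
        (fun a b hab => hresp1 a b hab)
      invFun := fun q => Quotient.liftOn' q (fun x => ((x * g : G) : G ⧸ H))
        (fun a b hab => hresp2 a b hab)
      left_inv := by
        intro q
        induction q using Quotient.inductionOn' with
        | h x => show (((x * g⁻¹) * g : G) : G ⧸ H) = _ ; rw [mul_assoc]; simp
      right_inv := by
        intro q
        induction q using Quotient.inductionOn' with
        | h x => show (((x * g) * g⁻¹ : G) : G ⧸ K) = _ ; rw [mul_assoc]; simp }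
  have hτ : ∀ (a : G) (q : G ⧸ H), τ (a • q) = a • τ q := by
    intro a q
    induction q using Quotient.inductionOn' with
    | h x =>
      show ((a * x * g⁻¹ : G) : G ⧸ K) = ((a * (x * g⁻¹) : G) : G ⧸ K)
      rw [mul_assoc]
  have hτsymm : ∀ (a : G) (y : G ⧸ K), τ.symm (a • y) = a • τ.symm y := by
    intro a y
    apply τ.injective
    rw [τ.apply_symm_apply, hτ, τ.apply_symm_apply]
  refine ⟨LinearEquiv.funCongrLeft ℤ_[p] ℤ_[p] τ.symm, ?_⟩
  intro a f
  funext y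
  show f (a⁻¹ • τ.symm y) = f (τ.symm (a⁻¹ • y))
  rw [hτsymm]

end conj




/-- for a finite `p`-group `G` and subgroups `H, K ≤ G`, the cyclic
permutation module `ℤ_p[G/H]` (modelled as the functions `G/H → ℤ_p`, with `G` permuting
the cosets) is an indecomposable `ℤ_p[G]`-module, and `ℤ_p[G/H] ≅ ℤ_p[G/K]` as
`ℤ_p[G]`-modules if and only if `H` and `K` are conjugate in `G`.  (`ℤ_p[G]`-submodules are
the `G`-stable `ℤ_p`-submodules, and `ℤ_p[G]`-isomorphisms the `G`-equivariant `ℤ_p`-linear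
isomorphisms.) -/
theorem stmt_12 (p : ℕ) [Fact p.Prime]
    (G : Type) [Group G] [Fintype G] (hG : IsPGroup p G) (H K : Subgroup G) :
    -- `ℤ_p[G/H]` is an indecomposable `ℤ_p[G]`-module
    (∀ A B : Submodule ℤ_[p] (G ⧸ H → ℤ_[p]),
      (∀ g : G, ∀ f ∈ A, (fun x => f (g⁻¹ • x)) ∈ A) →
      (∀ g : G, ∀ f ∈ B, (fun x => f (g⁻¹ • x)) ∈ B) →
      IsCompl A B → A = ⊥ ∨ B = ⊥) ∧
    -- `ℤ_p[G/H] ≅ ℤ_p[G/K]` as `ℤ_p[G]`-modules iff `H` and `K` are conjugate in `G`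
    ((∃ e : (G ⧸ H → ℤ_[p]) ≃ₗ[ℤ_[p]] (G ⧸ K → ℤ_[p]),
        ∀ (g : G) (f : G ⧸ H → ℤ_[p]),
          e (fun x => f (g⁻¹ • x)) = fun y => e f (g⁻¹ • y)) ↔
      ∃ g : G, Subgroup.map (MulAut.conj g).toMonoidHom H = K) := by
  constructor
  · exact fun A B hA hB hc => helper_indec hG H A B hA hB hc
  constructor
  · rintro ⟨e, he⟩
    have hesymm : ∀ (g : G) (f' : G ⧸ K → ℤ_[p]),
        e.symm (fun z => f' (g⁻¹ • z)) = fun x => e.symm f' (g⁻¹ • x) := by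
      intro g f'
      apply e.injective
      rw [he g (e.symm f'), e.apply_symm_apply, e.apply_symm_apply]
    obtain ⟨y₁, hy₁⟩ := helper_fixed hG H K e he
    obtain ⟨g₁, rfl⟩ := QuotientGroup.mk_surjective y₁
    have h1 : ∀ h ∈ H, g₁⁻¹ * h * g₁ ∈ K := by
      intro h hh
      have h2 := hy₁ h⁻¹ (H.inv_mem hh)
      have h3 : ((h⁻¹ * g₁ : G) : G ⧸ K) = ((g₁ : G) : G ⧸ K) := h2
      rw [QuotientGroup.eq] at h3
      simpa [mul_assoc] using h3
    obtain ⟨y₂, hy₂⟩ := helper_fixed (K := H) hG K e.symm hesymm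
    obtain ⟨g₂, rfl⟩ := QuotientGroup.mk_surjective y₂
    have h2 : ∀ k ∈ K, g₂⁻¹ * k * g₂ ∈ H := by
      intro k hk
      have h2' := hy₂ k⁻¹ (K.inv_mem hk)
      have h3 : ((k⁻¹ * g₂ : G) : G ⧸ H) = ((g₂ : G) : G ⧸ H) := h2'
      rw [QuotientGroup.eq] at h3
      simpa [mul_assoc] using h3
    have hle1 : Subgroup.map (MulAut.conj g₁⁻¹).toMonoidHom H ≤ K := by
      rintro x ⟨h, hh, rfl⟩
      simpa [MulAut.conj_apply, mul_assoc] using h1 h hh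
    have hle2 : Subgroup.map (MulAut.conj g₂⁻¹).toMonoidHom K ≤ H := by
      rintro x ⟨k, hk, rfl⟩
      simpa [MulAut.conj_apply, mul_assoc] using h2 k hk
    have hc1 : Nat.card (Subgroup.map (MulAut.conj g₁⁻¹).toMonoidHom H) = Nat.card H :=
      (Nat.card_congr (H.equivMapOfInjective (MulAut.conj g₁⁻¹).toMonoidHom
        (MulAut.conj g₁⁻¹).injective).toEquiv).symm
    have hc2 : Nat.card (Subgroup.map (MulAut.conj g₂⁻¹).toMonoidHom K) = Nat.card K :=
      (Nat.card_congr (K.equivMapOfInjective (MulAut.conj g₂⁻¹).toMonoidHom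
        (MulAut.conj g₂⁻¹).injective).toEquiv).symm
    have hkh : Nat.card K ≤ Nat.card H := by
      have := Subgroup.card_le_of_le hle2
      omega
    have hhk : Nat.card H ≤ Nat.card K := by
      have := Subgroup.card_le_of_le hle1
      omega
    exact ⟨g₁⁻¹, Subgroup.eq_of_le_of_card_ge hle1 (by omega)⟩
  · rintro ⟨g, hg⟩
    exact helper_conj H K g hg
end
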